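/- arXiv:0811.3693 — 4 statements merged into one kernel-verified Lean document; each statement's English description precedes it below -/
import Mathlib

section
/- Let A be a commutative ring, d a derivation on A, and a, b ∈ A. Then for every natural number m, the element a^(m+1) · d^[m](b) (where d^[m] denotes the m-fold iterate of d) lies in the ideal of A generated by the elements d^[k](a·b) for 0 ≤ k ≤ m. -/
/-!
The ideals `I n = ⟨d^[k] c : k ≤ n⟩` satisfy `d (I n) ⊆ I (n + 1)`, by the Leibniz rule.
Inducting on `m`, with `x = a^(m+1) d^[m] b ∈ I m` the Leibniz rule gives
`a^(m+2) d^[m+1] b = a * d x - (m + 1) * d a * x`, which lies in `I (m + 1)`.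
-/

namespace Derivation

variable {R A : Type*} [CommSemiring R]

def iterateSpan [CommSemiring A] [Algebra R A] (d : Derivation R A A) (c : A) (n : ℕ) :
    Ideal A :=
  Ideal.span {x : A | ∃ k ≤ n, x = (⇑d)^[k] c}

theorem iterateSpan_mono [CommSemiring A] [Algebra R A] (d : Derivation R A A) (c : A)
    {m n : ℕ} (h : m ≤ n) : d.iterateSpan c m ≤ d.iterateSpan c n :=
  Ideal.span_mono fun _ ⟨k, hk, hx⟩ => ⟨k, hk.trans h, hx⟩

theorem iterate_mem_iterateSpan [CommSemiring A] [Algebra R A] (d : Derivation R A A) (c : A)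
    (n : ℕ) : (⇑d)^[n] c ∈ d.iterateSpan c n :=
  Ideal.subset_span ⟨n, le_rfl, rfl⟩

theorem apply_mem_iterateSpan_succ [CommSemiring A] [Algebra R A] (d : Derivation R A A)
    (c : A) {n : ℕ} {x : A} (hx : x ∈ d.iterateSpan c n) : d x ∈ d.iterateSpan c (n + 1) := by
  induction hx using Submodule.span_induction with
  | mem y hy =>
    obtain ⟨k, hk, rfl⟩ := hy
    rw [← Function.iterate_succ_apply' d]
    exact d.iterateSpan_mono c (Nat.succ_le_succ hk) (d.iterate_mem_iterateSpan c (k + 1))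
  | zero => simp
  | add y z _ _ hy hz => simpa using add_mem hy hz
  | smul r y hy hdy =>
    rw [smul_eq_mul, leibniz]
    exact add_mem (Ideal.mul_mem_left _ r hdy)
      (Ideal.mul_mem_right _ _ (d.iterateSpan_mono c n.le_succ hy))

theorem pow_succ_mul_iterate_mem_iterateSpan [CommRing A] [Algebra R A]
    (d : Derivation R A A) (a b : A) (m : ℕ) :
    a ^ (m + 1) * (⇑d)^[m] b ∈ d.iterateSpan (a * b) m := by
  induction m with
  | zero => simpa using d.iterate_mem_iterateSpan (a * b) 0
  | succ m ih =>
    set x := a ^ (m + 1) * (⇑d)^[m] b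
    have key : a ^ (m + 2) * (⇑d)^[m + 1] b = a * d x - ((m + 1 : A) * d a) * x := by
      simp only [x, leibniz, leibniz_pow, Function.iterate_succ_apply', smul_eq_mul, nsmul_eq_mul,
        Nat.add_sub_cancel]
      push_cast
      ring
    rw [key]
    exact sub_mem (Ideal.mul_mem_left _ a (d.apply_mem_iterateSpan_succ _ ih))
      (Ideal.mul_mem_left _ _ (d.iterateSpan_mono _ m.le_succ ih))

end Derivation

/-- For a derivation `d` on a commutative ring `A` and `a b : A`, the element
`a^(m+1) * d^[m] b` lies in the ideal generated by the elements `d^[k] (a * b)` for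
`0 ≤ k ≤ m`. -/
theorem stmt14 {A : Type*} [CommRing A] (d : Derivation ℤ A A) (a b : A) (m : ℕ) :
    a ^ (m + 1) * (⇑d)^[m] b ∈
      Ideal.span {x : A | ∃ k ≤ m, x = (⇑d)^[k] (a * b)} :=
  d.pow_succ_mul_iterate_mem_iterateSpan a b m
end

section
/- Let A be a commutative ring, d a derivation on A, and I a radical ideal of A (I equals its own radical) which is a differential ideal for d (d(I) ⊆ I). Then for any subset S ⊆ A, the colon ideal (I : S) = {x ∈ A : x·s ∈ I for all s ∈ S} is again a radical ideal and a differential ideal for d. -/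
/-!
For a radical ideal `I`, `x ^ n * s ∈ I` gives `(x * s) ^ (n + 1) ∈ I`, so `I : S` is radical.
For differentiality it suffices that `a * b ∈ I` implies `d a * b ∈ I`: applying `d` gives
`a * d b + b * d a ∈ I`, and multiplying by `d a * b` shows `(d a * b) ^ 2 ∈ I`.
-/

namespace Ideal

theorem IsRadical.colon {A : Type*} [CommSemiring A] {I : Ideal A} (hI : I.IsRadical)
    (S : Set A) : (I.colon S).IsRadical := by
  rintro x ⟨n, hn⟩
  refine Submodule.mem_colon.mpr fun s hs => hI ⟨n + 1, ?_⟩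
  have hns : x ^ n * s ∈ I := Submodule.mem_colon.mp hn s hs
  have hpow : (x * s) ^ (n + 1) = (x ^ n * s) * (x * s ^ n) := by ring
  exact hpow ▸ I.mul_mem_right _ hns

variable {R A : Type*} [CommSemiring R] [CommRing A] [Algebra R A]
  {D : Derivation R A A} {I : Ideal A}

theorem IsRadical.derivation_mul_mem (hI : I.IsRadical) (hD : ∀ x ∈ I, D x ∈ I) {a b : A}
    (hab : a * b ∈ I) : D a * b ∈ I := by
  refine (isRadical_iff_pow_one_lt 2 one_lt_two).mp hI _ ?_
  have hDab : a * D b + b * D a ∈ I := by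
    simpa only [D.leibniz, smul_eq_mul] using hD _ hab
  have hsq : (D a * b) ^ 2 = (D a * b) * (a * D b + b * D a) - (a * b) * (D a * D b) := by ring
  exact hsq ▸ I.sub_mem (I.mul_mem_left _ hDab) (I.mul_mem_right _ hab)

theorem IsRadical.derivation_mem_colon (hI : I.IsRadical) (hD : ∀ x ∈ I, D x ∈ I)
    {S : Set A} {x : A} (hx : x ∈ I.colon S) : D x ∈ I.colon S :=
  Submodule.mem_colon.mpr fun s hs => hI.derivation_mul_mem hD (Submodule.mem_colon.mp hx s hs)

end Ideal

/-- Let `d` be a derivation on a commutative ring `A` and `I` a radical differential ideal.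
Then for any subset `S ⊆ A`, the colon ideal `(I : S) = {x | x * s ∈ I for all s ∈ S}` is
again a radical differential ideal. -/
theorem stmt16 {A : Type*} [CommRing A] (d : Derivation ℤ A A) (I : Ideal A)
    (hrad : I.radical = I) (hdiff : ∀ x ∈ I, d x ∈ I) (S : Set A) :
    ∃ J : Ideal A, (∀ x : A, x ∈ J ↔ ∀ s ∈ S, x * s ∈ I) ∧
      J.radical = J ∧ (∀ x ∈ J, d x ∈ J) := by
  have hI : I.IsRadical := Ideal.radical_eq_iff.mp hrad
  exact ⟨I.colon S, fun _ => Submodule.mem_colon, (hI.colon S).radical,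
    fun _ => hI.derivation_mem_colon hdiff⟩
end

section
/- Let A be a commutative ring which is a ℚ-algebra, d a derivation on A, and I an ideal of A which is a differential ideal for d (d(I) ⊆ I). Then the radical √I is also a differential ideal for d, i.e. d(√I) ⊆ √I. -/
/-!
If `x ^ (m + 1) * (d x) ^ j ∈ I`, differentiating and multiplying by `d x` gives
`(m + 1) * x ^ m * (d x) ^ (j + 2)` plus a multiple of `x ^ (m + 1) * (d x) ^ j`, so over `ℚ` we may
trade one factor `x` for two factors `d x`. Starting from `x ^ n ∈ I` and repeating `n` times gives
`(d x) ^ (2 * n) ∈ I`.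
-/

theorem Ideal.mem_of_natCast_mul_mem {A : Type*} [CommRing A] [Algebra ℚ A] {I : Ideal A} {n : ℕ}
    (hn : n ≠ 0) {a : A} (h : (n : A) * a ∈ I) : a ∈ I := by
  have hunit : IsUnit (n : A) := by
    simpa using (Nat.cast_ne_zero.mpr hn : (n : ℚ) ≠ 0).isUnit.map (algebraMap ℚ A)
  exact (I.unit_mul_mem_iff_mem hunit).mp h

namespace Derivation

variable {R A : Type*} [CommRing R] [CommRing A] [Algebra R A] (d : Derivation R A A)

theorem mul_leibniz_pow (a : A) (n : ℕ) : a * d (a ^ n) = n • a ^ n * d a := by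
  cases n with
  | zero => simp
  | succ n =>
    rw [leibniz_pow, Nat.add_sub_cancel, smul_eq_mul, nsmul_eq_mul, nsmul_eq_mul]
    ring

theorem natCast_mul_pow_mul_pow_add_two_mem {I : Ideal A} (hI : ∀ y ∈ I, d y ∈ I) {x : A}
    {m j : ℕ} (h : x ^ (m + 1) * d x ^ j ∈ I) :
    ((m + 1 : ℕ) : A) * (x ^ m * d x ^ (j + 2)) ∈ I := by
  have hsplit : d x * d (x ^ (m + 1) * d x ^ j)
      = ((m + 1 : ℕ) : A) * (x ^ m * d x ^ (j + 2)) + j * d (d x) * (x ^ (m + 1) * d x ^ j) :=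
    calc d x * d (x ^ (m + 1) * d x ^ j)
        = x ^ (m + 1) * (d x * d (d x ^ j)) + d x * d x ^ j * d (x ^ (m + 1)) := by
          rw [leibniz, smul_eq_mul, smul_eq_mul]
          ring
      _ = _ := by
          rw [mul_leibniz_pow, leibniz_pow, Nat.add_sub_cancel, smul_eq_mul, nsmul_eq_mul,
            nsmul_eq_mul]
          ring
  have hmem : d x * d (x ^ (m + 1) * d x ^ j) ∈ I := I.mul_mem_left _ (hI _ h)
  rw [hsplit] at hmem
  exact (I.add_mem_iff_left (I.mul_mem_left _ h)).mp hmem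

theorem pow_mul_pow_add_two_mul_mem [Algebra ℚ A] {I : Ideal A} (hI : ∀ y ∈ I, d y ∈ I)
    {x : A} (k : ℕ) : ∀ {m j : ℕ}, x ^ (m + k) * d x ^ j ∈ I → x ^ m * d x ^ (j + 2 * k) ∈ I := by
  induction k with
  | zero => exact id
  | succ k ih =>
    intro m j h
    have hstep := Ideal.mem_of_natCast_mul_mem (m + k).succ_ne_zero
      (d.natCast_mul_pow_mul_pow_add_two_mem hI (m := m + k) h)
    rw [mul_add_one, ← add_assoc, add_right_comm]
    exact ih hstep

end Derivation

/-- Let `A` be a commutative ring which is a `ℚ`-algebra (characteristic zero), `d` a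
derivation on `A`, and `I` a differential ideal for `d`. Then the radical `√I` is also a
differential ideal for `d`. -/
theorem stmt17 {A : Type*} [CommRing A] [Algebra ℚ A] (d : Derivation ℤ A A) (I : Ideal A)
    (hdiff : ∀ x ∈ I, d x ∈ I) :
    ∀ x ∈ I.radical, d x ∈ I.radical := by
  rintro x ⟨n, hn⟩
  refine ⟨2 * n, ?_⟩
  simpa using d.pow_mul_pow_add_two_mul_mem hdiff n (m := 0) (j := 0) (by simpa using hn)
end

section
/- Let A be a commutative ring, d a derivation on A, and 𝔞₁, …, 𝔞ᵣ ideals of A which are pairwise comaximal (𝔞ᵢ + 𝔞ⱼ = A for all i ≠ j). If the intersection 𝔞₁ ∩ ⋯ ∩ 𝔞ᵣ is a differential ideal for d, then each 𝔞ᵢ is a differential ideal for d. -/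
/-! Write `1 = a + u` with `a ∈ 𝔞ᵢ` and `u` in the intersection `J` of the other ideals. For
`x ∈ 𝔞ᵢ` the product `x u` lies in `⋂ⱼ 𝔞ⱼ`, so `d(xu) = x du + u dx ∈ 𝔞ᵢ` gives `u dx ∈ 𝔞ᵢ`, and
then `dx = a dx + u dx ∈ 𝔞ᵢ`. -/

theorem Derivation.map_mem_of_sup_eq_top {R A : Type*} [CommSemiring R] [CommRing A]
    [Algebra R A] (d : Derivation R A A) {I J : Ideal A} (hIJ : I ⊔ J = ⊤)
    (hd : ∀ y ∈ I ⊓ J, d y ∈ I) {x : A} (hx : x ∈ I) : d x ∈ I := by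
  obtain ⟨a, ha, u, hu, hau⟩ :=
    Submodule.mem_sup.mp (hIJ ▸ Submodule.mem_top : (1 : A) ∈ I ⊔ J)
  have hdxu : x • d u + u • d x ∈ I :=
    d.leibniz x u ▸ hd _ ⟨I.mul_mem_right u hx, J.mul_mem_left x hu⟩
  have hudx : u * d x ∈ I := (I.add_mem_iff_right (I.mul_mem_right _ hx)).mp hdxu
  have hsplit : d x = a * d x + u * d x := by rw [← add_mul, hau, one_mul]
  exact hsplit ▸ I.add_mem (I.mul_mem_right _ ha) hudx

/-- Let `d` be a derivation on a commutative ring `A` and `𝔞 1, …, 𝔞 r` pairwise comaximal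
ideals of `A` (`𝔞 i + 𝔞 j = A` for `i ≠ j`). If the intersection `⋂ᵢ 𝔞 i` is a differential
ideal for `d`, then each `𝔞 i` is a differential ideal for `d`. -/
theorem stmt18 {A : Type*} [CommRing A] (d : Derivation ℤ A A) (r : ℕ)
    (𝔞 : Fin r → Ideal A) (hcom : ∀ i j, i ≠ j → 𝔞 i ⊔ 𝔞 j = ⊤)
    (hdiff : ∀ x ∈ ⨅ i, 𝔞 i, d x ∈ ⨅ i, 𝔞 i) :
    ∀ i, ∀ x ∈ 𝔞 i, d x ∈ 𝔞 i := by
  intro i x hx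
  have hcomaximal : 𝔞 i ⊔ ⨅ j ∈ Finset.univ.erase i, 𝔞 j = ⊤ :=
    Ideal.sup_iInf_eq_top fun j hj ↦ hcom i j (Finset.ne_of_mem_erase hj).symm
  refine d.map_mem_of_sup_eq_top hcomaximal (fun y ⟨hyi, hyJ⟩ ↦ ?_) hx
  have hy : y ∈ ⨅ j, 𝔞 j := Ideal.mem_iInf.mpr fun j ↦ by
    rcases eq_or_ne j i with rfl | hji
    · exact hyi
    · exact (Submodule.mem_iInf _).mp ((Submodule.mem_iInf _).mp hyJ j)
        (Finset.mem_erase.mpr ⟨hji, Finset.mem_univ j⟩)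
  exact Ideal.mem_iInf.mp (hdiff y hy) i
end
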